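/- For all (x,U), (y,V) ∈ X × T* and every ordinal α: H^α_{x,U} = H^α_{y,V} if and only if (x,U) ∼_α (y,V). -/

import Mathlib

noncomputable section

variable {G X : Type*} [TopologicalSpace G] [Group G] [IsTopologicalGroup G]
  [TopologicalSpace X] [MulAction G X] [ContinuousSMul G X]

/-- The closure of the partial orbit `U · x`. -/
def orbCl (U : Set G) (x : X) : Set X :=
  closure ((fun g : G => g • x) '' U)

/-- Hjorth's ordinal-indexed asymmetric relations `(x,U) ≤_α (y,V)`:
`≤₀` is inclusion of orbit closures; `(x,U) ≤_{α+1} (y,V)` iff for every nonempty open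
`U' ⊆ U` there is a nonempty open `V' ⊆ V` with `(y,V') ≤_α (x,U')`; limits are
conjunctions. -/
def hle (α : Ordinal) : X → Set G → X → Set G → Prop :=
  Ordinal.limitRecOn (motive := fun _ => X → Set G → X → Set G → Prop) α
    (fun x U y V => orbCl U x ⊆ orbCl V y)
    (fun _ ih x U y V =>
      ∀ U' : Set G, IsOpen U' → U'.Nonempty → U' ⊆ U →
        ∃ V' : Set G, IsOpen V' ∧ V'.Nonempty ∧ V' ⊆ V ∧ ih y V' x U')
    (fun _ _ ih x U y V => ∀ β hβ, ih β hβ x U y V)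
/-- The symmetric relations `(x,U) ∼_α (y,V)`: `∼₀` is equality of orbit closures;
`∼_{α+1}` requires `∼_α` together with the two back-and-forth conditions; limits are
conjunctions. -/
def hsim (α : Ordinal) : X → Set G → X → Set G → Prop :=
  Ordinal.limitRecOn (motive := fun _ => X → Set G → X → Set G → Prop) α
    (fun x U y V => orbCl U x = orbCl V y)
    (fun _ ih x U y V =>
      ih x U y V ∧
      (∀ U' : Set G, IsOpen U' → U'.Nonempty → U' ⊆ U →
        ∃ V' : Set G, IsOpen V' ∧ V'.Nonempty ∧ V' ⊆ V ∧ ih y V' x U') ∧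
      (∀ V' : Set G, IsOpen V' → V'.Nonempty → V' ⊆ V →
        ∃ U' : Set G, IsOpen U' ∧ U'.Nonempty ∧ U' ⊆ U ∧ ih x U' y V'))
    (fun _ _ ih x U y V => ∀ β hβ, ih β hβ x U y V)

open scoped Classical

/-- Hjorth's invariant functions `H^α_{x,U}`, represented as a pair consisting of
`I_{x,U}(0) = closure (U·x)` together with the map sending a triple `((y,V),β)` with
`V ∈ T*` and `β < α` to the value (`some true` for `1`, `some false` for `0`) of
`H^α_{x,U}(y,V,β)`, and `none` outside the domain.  `H^{β+1}_{x,U}(y,V,β) = 1` iff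
there is a nonempty open `U' ⊆ U` with `H^β_{x,U'} = H^β_{y,V}`; the restriction
property `H^α_{x,U} ↾ β = H^β_{x,U}` holds by construction. -/
noncomputable def hH (α : Ordinal) (x : X) (U : Set G) :
    Set X × ((X × Set G) × Ordinal → Option Bool) :=
  ⟨orbCl U x,
    fun q =>
      if h : q.2 < α ∧ IsOpen q.1.2 ∧ q.1.2.Nonempty then
        some (if (∃ U' : Set G, IsOpen U' ∧ U'.Nonempty ∧ U' ⊆ U ∧
            hH q.2 x U' = hH q.2 q.1.1 q.1.2) then true else false)
      else none⟩
termination_by α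
decreasing_by all_goals exact h.1



/-!
Both `H^α` and `∼_α` satisfy the same recursion: `(x,U)` and `(y,V)` are identified at stage `α`
iff their orbit closures agree and, for every `β < α` and every `(z,W) ∈ X × T*`, some nonempty
open shrinking of `U` is `β`-identified with `(z,W)` iff some nonempty open shrinking of `V` is.
For `H^α` this is its definition. For `∼_α` it holds because each `∼_β` is an equivalence
relation, the back-and-forth clauses of `∼_{β+1}` transport shrinkings of `U` to shrinkings of `V`
and back, and `∼_α` implies `∼_β` for `β ≤ α`. Induction on `α` then identifies the two.
-/

section Recursion

omit [IsTopologicalGroup G] [ContinuousSMul G X]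

def AgreeBelow (R : Ordinal → X → Set G → X → Set G → Prop) (α : Ordinal) (x : X) (U : Set G)
    (y : X) (V : Set G) : Prop :=
  orbCl U x = orbCl V y ∧
    ∀ β < α, ∀ (z : X) (W : Set G), IsOpen W → W.Nonempty →
      ((∃ U' : Set G, IsOpen U' ∧ U'.Nonempty ∧ U' ⊆ U ∧ R β x U' z W) ↔
        (∃ V' : Set G, IsOpen V' ∧ V'.Nonempty ∧ V' ⊆ V ∧ R β y V' z W))

theorem agreeBelow_congr {R S : Ordinal → X → Set G → X → Set G → Prop} {α : Ordinal}
    (h : ∀ β < α, R β = S β) (x : X) (U : Set G) (y : X) (V : Set G) :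
    AgreeBelow R α x U y V ↔ AgreeBelow S α x U y V := by
  unfold AgreeBelow
  refine and_congr_right fun _ => forall₂_congr fun β hβ => ?_
  rw [h β hβ]

theorem hH_eq_iff_agreeBelow (α : Ordinal) (x y : X) (U V : Set G) :
    hH α x U = hH α y V ↔
      AgreeBelow (fun β x U y V => hH β x U = hH β y V) α x U y V := by
  rw [hH, hH, Prod.mk.injEq, funext_iff]
  refine and_congr_right fun _ => ⟨fun h β hβ z W hW hWne => ?_, fun h q => ?_⟩
  · simpa [hβ, hW, hWne] using h ((z, W), β)
  · obtain ⟨⟨z, W⟩, β⟩ := q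
    by_cases hq : β < α ∧ IsOpen W ∧ W.Nonempty
    · simpa [hq] using h β hq.1 z W hq.2.1 hq.2.2
    · simp only [dif_neg hq]

theorem hsim_zero (x y : X) (U V : Set G) : hsim 0 x U y V ↔ orbCl U x = orbCl V y := by
  unfold hsim; rw [Ordinal.limitRecOn_zero]

theorem hsim_add_one (α : Ordinal) (x y : X) (U V : Set G) :
    hsim (α + 1) x U y V ↔
      hsim α x U y V ∧
      (∀ U' : Set G, IsOpen U' → U'.Nonempty → U' ⊆ U →
        ∃ V' : Set G, IsOpen V' ∧ V'.Nonempty ∧ V' ⊆ V ∧ hsim α y V' x U') ∧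
      (∀ V' : Set G, IsOpen V' → V'.Nonempty → V' ⊆ V →
        ∃ U' : Set G, IsOpen U' ∧ U'.Nonempty ∧ U' ⊆ U ∧ hsim α x U' y V') := by
  unfold hsim; rw [Ordinal.limitRecOn_add_one]

theorem hsim_of_isSuccLimit {α : Ordinal} (h : Order.IsSuccLimit α) (x y : X) (U V : Set G) :
    hsim α x U y V ↔ ∀ β < α, hsim β x U y V := by
  unfold hsim; rw [Ordinal.limitRecOn_limit _ _ _ _ h]

theorem hsim_refl (α : Ordinal) (x : X) (U : Set G) : hsim α x U x U := by
  induction α using Ordinal.limitRecOn generalizing x U with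
  | zero => exact (hsim_zero x x U U).2 rfl
  | add_one β ih =>
    exact (hsim_add_one β x x U U).2
      ⟨ih x U, fun U' hU' hne hsub => ⟨U', hU', hne, hsub, ih x U'⟩,
        fun U' hU' hne hsub => ⟨U', hU', hne, hsub, ih x U'⟩⟩
  | limit α hα ih => exact (hsim_of_isSuccLimit hα x x U U).2 fun β hβ => ih β hβ x U

theorem hsim_trans {α : Ordinal} {x y z : X} {U V W : Set G}
    (hxy : hsim α x U y V) (hyz : hsim α y V z W) : hsim α x U z W := by
  induction α using Ordinal.limitRecOn generalizing x y z U V W with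
  | zero =>
    exact (hsim_zero x z U W).2 (((hsim_zero x y U V).1 hxy).trans ((hsim_zero y z V W).1 hyz))
  | add_one β ih =>
    obtain ⟨hxy, forth₁, back₁⟩ := (hsim_add_one β x y U V).1 hxy
    obtain ⟨hyz, forth₂, back₂⟩ := (hsim_add_one β y z V W).1 hyz
    refine (hsim_add_one β x z U W).2
      ⟨ih hxy hyz, fun U' hU' hne hsub => ?_, fun W' hW' hne hsub => ?_⟩
    · obtain ⟨V', hV', hV'ne, hV'sub, hV'U'⟩ := forth₁ U' hU' hne hsub
      obtain ⟨W', hW', hW'ne, hW'sub, hW'V'⟩ := forth₂ V' hV' hV'ne hV'sub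
      exact ⟨W', hW', hW'ne, hW'sub, ih hW'V' hV'U'⟩
    · obtain ⟨V', hV', hV'ne, hV'sub, hV'W'⟩ := back₂ W' hW' hne hsub
      obtain ⟨U', hU', hU'ne, hU'sub, hU'V'⟩ := back₁ V' hV' hV'ne hV'sub
      exact ⟨U', hU', hU'ne, hU'sub, ih hU'V' hV'W'⟩
  | limit α hα ih =>
    exact (hsim_of_isSuccLimit hα x z U W).2 fun β hβ =>
      ih β hβ ((hsim_of_isSuccLimit hα x y U V).1 hxy β hβ)
        ((hsim_of_isSuccLimit hα y z V W).1 hyz β hβ)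

theorem hsim_of_le {α β : Ordinal} (hβα : β ≤ α) {x y : X} {U V : Set G}
    (h : hsim α x U y V) : hsim β x U y V := by
  induction α using Ordinal.limitRecOn with
  | zero => rwa [nonpos_iff_eq_zero.1 hβα]
  | add_one γ ih =>
    rcases hβα.eq_or_lt with rfl | hβγ
    · exact h
    · exact ih (Order.lt_add_one_iff.1 hβγ) ((hsim_add_one γ x y U V).1 h).1
  | limit α hα ih =>
    rcases hβα.eq_or_lt with rfl | hβα
    · exact h
    · exact (hsim_of_isSuccLimit hα x y U V).1 h β hβα

theorem agreeBelow_of_hsim {α : Ordinal} {x y : X} {U V : Set G} (h : hsim α x U y V) :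
    AgreeBelow hsim α x U y V := by
  refine ⟨(hsim_zero x y U V).1 (hsim_of_le (zero_le (a := α)) h), fun β hβ z W _ _ => ?_⟩
  obtain ⟨-, forth, back⟩ := (hsim_add_one β x y U V).1 (hsim_of_le (Order.add_one_le_of_lt hβ) h)
  constructor
  · rintro ⟨U', hU', hne, hsub, hU'W⟩
    obtain ⟨V', hV', hV'ne, hV'sub, hV'U'⟩ := forth U' hU' hne hsub
    exact ⟨V', hV', hV'ne, hV'sub, hsim_trans hV'U' hU'W⟩
  · rintro ⟨V', hV', hne, hsub, hV'W⟩
    obtain ⟨U', hU', hU'ne, hU'sub, hU'V'⟩ := back V' hV' hne hsub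
    exact ⟨U', hU', hU'ne, hU'sub, hsim_trans hU'V' hV'W⟩

theorem hsim_of_agreeBelow {α : Ordinal} {x y : X} {U V : Set G}
    (h : AgreeBelow hsim α x U y V) : hsim α x U y V := by
  induction α using Ordinal.limitRecOn with
  | zero => exact (hsim_zero x y U V).2 h.1
  | add_one β ih =>
    obtain ⟨horb, hshrink⟩ := h
    refine (hsim_add_one β x y U V).2 ⟨ih ⟨horb, fun γ hγ => hshrink γ (hγ.trans (lt_add_one β))⟩,
      fun U' hU' hne hsub => ?_, fun V' hV' hne hsub => ?_⟩
    · exact (hshrink β (lt_add_one β) x U' hU' hne).1 ⟨U', hU', hne, hsub, hsim_refl β x U'⟩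
    · exact (hshrink β (lt_add_one β) y V' hV' hne).2 ⟨V', hV', hne, hsub, hsim_refl β y V'⟩
  | limit α hα ih =>
    exact (hsim_of_isSuccLimit hα x y U V).2 fun β hβ =>
      ih β hβ ⟨h.1, fun γ hγ => h.2 γ (hγ.trans hβ)⟩

theorem hsim_iff_agreeBelow (α : Ordinal) (x y : X) (U V : Set G) :
    hsim α x U y V ↔ AgreeBelow hsim α x U y V :=
  ⟨agreeBelow_of_hsim, hsim_of_agreeBelow⟩

end Recursion

theorem hH_eq_iff_hsim_general (α : Ordinal) (x y : X) (U V : Set G) :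
    hH α x U = hH α y V ↔ hsim α x U y V := by
  induction α using WellFoundedLT.induction generalizing x y U V with
  | _ α ih =>
  have hsame : ∀ β < α, (fun x U y V => hH β x U = hH β y V) = hsim β :=
    fun β hβ => by ext x U y V; exact ih β hβ x y U V
  rw [hH_eq_iff_agreeBelow, agreeBelow_congr hsame, hsim_iff_agreeBelow]

/-- For all `(x,U), (y,V) ∈ X × T*` and every ordinal `α`:
`H^α_{x,U} = H^α_{y,V}` iff `(x,U) ∼_α (y,V)`. -/
theorem hH_eq_iff_hsim (α : Ordinal) (x y : X) (U V : Set G)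
    (hU : IsOpen U) (hUne : U.Nonempty) (hV : IsOpen V) (hVne : V.Nonempty) :
    hH α x U = hH α y V ↔ hsim α x U y V :=
  hH_eq_iff_hsim_general α x y U V

end
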